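/- arXiv:1808.03412 — 2 statements merged into one kernel-verified Lean document; each statement's English description precedes it below -/
import Mathlib

section
/- Fix a positive integer T that is a perfect square. Let (Xᵢ)_{i≥1} be independent geometric random variables on the positive integers where Xᵢ has success probability 1/i (so E[Xᵢ] = i). Let A be the minimal n such that X₁ + ⋯ + Xₙ ≥ T. Then E[A] ≤ 2√T. -/
open MeasureTheory ProbabilityTheory Finset

/-!
Since `A > n` iff `X₁ + ⋯ + Xₙ < T`, and `A ≤ T` almost surely (every `Xᵢ ≥ 1`),
`E[A] ≤ ∑_{n<T} P(X₁ + ⋯ + Xₙ < T)`. The first `m = √T` terms are at most `1`. From index `m` on,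
`Xᵢ ∼ Geo(1/i)` is stochastically larger than `Geo(1/m)`, so dropping `X₁, …, X_{m-1}` gives
`P(X₁ + ⋯ + Xₙ < T) ≤ P(Y₁ + ⋯ + Y_{n-m+1} ≤ T - 1)` for i.i.d. `Yⱼ ∼ Geo(1/m)`. The sum of these
probabilities over `n` is the expected number of partial sums of the `Yⱼ` in `[1, T - 1]`, which is
at most `(T - 1)/m`. Hence `E[A] ≤ m + T/m = 2√T`.
-/

noncomputable def geomWeight (p : ℝ) (k : ℕ) : ℝ := (1 - p) ^ (k - 1) * p

lemma geomWeight_nonneg {p : ℝ} (hp0 : 0 ≤ p) (hp1 : p ≤ 1) (k : ℕ) : 0 ≤ geomWeight p k :=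
  mul_nonneg (pow_nonneg (sub_nonneg.mpr hp1) _) hp0

lemma sum_Icc_geomWeight (p : ℝ) (t : ℕ) :
    ∑ k ∈ Icc 1 t, geomWeight p k = 1 - (1 - p) ^ t := by
  induction t with
  | zero => simp
  | succ t ih =>
    rw [sum_Icc_succ_top (by omega), ih, geomWeight, Nat.add_sub_cancel, pow_succ]
    ring

/-- The renewal function `s ↦ 1 + s p` of `Geo(p)` solves the renewal equation. -/
lemma sum_Icc_geomWeight_mul_renewal (p : ℝ) (t : ℕ) :
    ∑ k ∈ Icc 1 t, geomWeight p k * (1 + (t - k : ℝ) * p) = t * p := by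
  induction t with
  | zero => simp
  | succ t ih =>
    have hshift : ∑ k ∈ Icc 1 t, geomWeight p k * (1 + ((t + 1 : ℕ) - k : ℝ) * p)
        = ∑ k ∈ Icc 1 t, geomWeight p k * (1 + (t - k : ℝ) * p)
          + p * ∑ k ∈ Icc 1 t, geomWeight p k := by
      rw [mul_sum, ← sum_add_distrib]
      refine sum_congr rfl fun k _ => ?_
      push_cast
      ring
    rw [sum_Icc_succ_top (by omega), hshift, ih, sum_Icc_geomWeight, geomWeight,
      Nat.add_sub_cancel]
    push_cast
    ring

/-- `geomSumCdf p j t = P(Y₁ + ⋯ + Yⱼ ≤ t)` for i.i.d. `Yᵢ ∼ Geo(p)`, obtained by conditioning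
on `Yⱼ = k`. -/
noncomputable def geomSumCdf (p : ℝ) : ℕ → ℕ → ℝ
  | 0, _ => 1
  | j + 1, t => ∑ k ∈ Icc 1 t, geomWeight p k * geomSumCdf p j (t - k)

lemma geomSumCdf_nonneg {p : ℝ} (hp0 : 0 ≤ p) (hp1 : p ≤ 1) (j t : ℕ) :
    0 ≤ geomSumCdf p j t := by
  induction j generalizing t with
  | zero => exact zero_le_one
  | succ j ih => exact sum_nonneg fun k _ => mul_nonneg (geomWeight_nonneg hp0 hp1 k) (ih _)

lemma sum_range_geomSumCdf_succ_le {p : ℝ} (hp0 : 0 ≤ p) (hp1 : p ≤ 1) (t J : ℕ) :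
    ∑ j ∈ range J, geomSumCdf p (j + 1) t ≤ t * p := by
  induction t using Nat.strong_induction_on generalizing J with
  | _ t ih =>
  have hinner : ∀ k ∈ Icc 1 t, ∑ j ∈ range J, geomSumCdf p j (t - k) ≤ 1 + (t - k : ℝ) * p := by
    intro k hk
    obtain ⟨hk1, hkt⟩ := mem_Icc.mp hk
    calc ∑ j ∈ range J, geomSumCdf p j (t - k)
        ≤ ∑ j ∈ range (J + 1), geomSumCdf p j (t - k) :=
          sum_le_sum_of_subset_of_nonneg (range_subset_range.mpr J.le_succ)
            fun j _ _ => geomSumCdf_nonneg hp0 hp1 j _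
      _ = 1 + ∑ j ∈ range J, geomSumCdf p (j + 1) (t - k) := by
          rw [sum_range_succ', add_comm]; rfl
      _ ≤ 1 + ((t - k : ℕ) : ℝ) * p := by gcongr; exact ih _ (by omega) J
      _ = 1 + (t - k : ℝ) * p := by rw [Nat.cast_sub hkt]
  calc ∑ j ∈ range J, geomSumCdf p (j + 1) t
      = ∑ k ∈ Icc 1 t, geomWeight p k * ∑ j ∈ range J, geomSumCdf p j (t - k) := by
        simp only [geomSumCdf, mul_sum]
        exact sum_comm
    _ ≤ ∑ k ∈ Icc 1 t, geomWeight p k * (1 + (t - k : ℝ) * p) :=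
        sum_le_sum fun k hk =>
          mul_le_mul_of_nonneg_left (hinner k hk) (geomWeight_nonneg hp0 hp1 k)
    _ = t * p := sum_Icc_geomWeight_mul_renewal p t

lemma sInf_le_card_filter_sum_lt {x : ℕ → ℕ} {T : ℕ} (hx : ∀ i ∈ Icc 1 T, 1 ≤ x i) :
    sInf {n | T ≤ ∑ i ∈ Icc 1 n, x i} ≤ #{n ∈ range T | ∑ i ∈ Icc 1 n, x i < T} := by
  set S := {n | T ≤ ∑ i ∈ Icc 1 n, x i}
  have hTS : T ∈ S := by simpa [S] using card_nsmul_le_sum (Icc 1 T) x 1 hx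
  have hST : sInf S ≤ T := Nat.sInf_le hTS
  calc sInf S = #(range (sInf S)) := (card_range _).symm
    _ ≤ _ := card_le_card fun n hn => by
        have hnA : n < sInf S := mem_range.mp hn
        have hnS : n ∉ S := Nat.notMem_of_lt_sInf hnA
        simp only [S, Set.mem_ofPred_eq, not_le] at hnS
        exact mem_filter.mpr ⟨mem_range.mpr (by omega), hnS⟩

section Probability

variable {Ω : Type*} [MeasurableSpace Ω] {μ : Measure Ω}

lemma measureReal_le_eq_sum [IsFiniteMeasure μ] {Z : Ω → ℕ} (hZ : Measurable Z) (u : ℕ) :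
    μ.real {ω | Z ω ≤ u} = ∑ v ∈ range (u + 1), μ.real {ω | Z ω = v} := by
  have hset : {ω | Z ω ≤ u} = Z ⁻¹' ↑(range (u + 1)) := by
    ext ω; simp
  rw [hset, ← sum_measureReal_preimage_singleton _ fun v _ => hZ (measurableSet_singleton v)]
  rfl

lemma measureReal_add_le_eq_sum [IsFiniteMeasure μ] {W Y : Ω → ℕ} (hW : Measurable W)
    (hY : Measurable Y) (hWY : IndepFun W Y μ) (t : ℕ) :
    μ.real {ω | W ω + Y ω ≤ t}
      = ∑ v ∈ range (t + 1), μ.real {ω | W ω = v} * μ.real {ω | Y ω ≤ t - v} := by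
  have hset : {ω | W ω + Y ω ≤ t} = ⋃ v ∈ range (t + 1), W ⁻¹' {v} ∩ Y ⁻¹' Set.Iic (t - v) := by
    ext ω
    simp only [Set.mem_ofPred_eq, Set.mem_iUnion, Set.mem_inter_iff, Set.mem_preimage,
      Set.mem_singleton_iff, Set.mem_Iic, mem_range, exists_prop]
    exact ⟨fun h => ⟨W ω, by omega, rfl, by omega⟩, fun ⟨v, _, hv, h⟩ => by omega⟩
  rw [hset, measureReal_biUnion_finset]
  · refine sum_congr rfl fun v _ => ?_
    simp only [measureReal_def, hWY.measure_inter_preimage_eq_mul _ _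
      (measurableSet_singleton v) measurableSet_Iic, ENNReal.toReal_mul]
    rfl
  · intro v _ v' _ hvv'
    exact Set.disjoint_left.mpr fun ω h h' => hvv' (h.1.symm.trans h'.1)
  · exact fun v _ => (hW (measurableSet_singleton v)).inter (hY measurableSet_Iic)

lemma measureReal_le_eq_measureReal_zero_add [IsFiniteMeasure μ] {Y : Ω → ℕ} {p : ℝ}
    (hY : Measurable Y)
    (hgeom : ∀ k, 1 ≤ k → μ {ω | Y ω = k} = ENNReal.ofReal (geomWeight p k))
    (hp0 : 0 ≤ p) (hp1 : p ≤ 1) (u : ℕ) :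
    μ.real {ω | Y ω ≤ u} = μ.real {ω | Y ω = 0} + (1 - (1 - p) ^ u) := by
  rw [measureReal_le_eq_sum hY, sum_range_succ', add_comm, ← sum_Icc_geomWeight p u,
    range_eq_Ico, sum_Ico_add' (fun v => μ.real {ω | Y ω = v}), zero_add,
    Ico_add_one_right_eq_Icc]
  congr 1
  refine sum_congr rfl fun k hk => ?_
  rw [measureReal_def, hgeom k (mem_Icc.mp hk).1,
    ENNReal.toReal_ofReal (geomWeight_nonneg hp0 hp1 k)]

lemma measure_eq_zero_of_geom [IsProbabilityMeasure μ] {Y : Ω → ℕ} {p : ℝ}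
    (hY : Measurable Y)
    (hgeom : ∀ k, 1 ≤ k → μ {ω | Y ω = k} = ENNReal.ofReal (geomWeight p k))
    (hp0 : 0 < p) (hp1 : p ≤ 1) : μ {ω | Y ω = 0} = 0 := by
  have hbound (u : ℕ) : μ.real {ω | Y ω = 0} ≤ (1 - p) ^ u := by
    have := measureReal_le_eq_measureReal_zero_add hY hgeom hp0.le hp1 u
    have := measureReal_le_one (μ := μ) (s := {ω | Y ω ≤ u})
    linarith
  have hlim := tendsto_pow_atTop_nhds_zero_of_lt_one (sub_nonneg.mpr hp1) (sub_lt_self 1 hp0)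
  exact ((measureReal_eq_zero_iff).mp
    (le_antisymm (ge_of_tendsto' hlim hbound) measureReal_nonneg))

lemma measureReal_le_eq_of_geom [IsProbabilityMeasure μ] {Y : Ω → ℕ} {p : ℝ}
    (hY : Measurable Y)
    (hgeom : ∀ k, 1 ≤ k → μ {ω | Y ω = k} = ENNReal.ofReal (geomWeight p k))
    (hp0 : 0 < p) (hp1 : p ≤ 1) (u : ℕ) :
    μ.real {ω | Y ω ≤ u} = 1 - (1 - p) ^ u := by
  rw [measureReal_le_eq_measureReal_zero_add hY hgeom hp0.le hp1,
    measureReal_def, measure_eq_zero_of_geom hY hgeom hp0 hp1, ENNReal.toReal_zero, zero_add]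

lemma measureReal_sum_le_le_geomSumCdf [IsProbabilityMeasure μ] {ι : Type*} {X : ι → Ω → ℕ}
    (hmeas : ∀ i, Measurable (X i)) (hindep : iIndepFun X μ) {p : ℝ} (hp0 : 0 ≤ p) (hp1 : p ≤ 1)
    (s : Finset ι) (hcdf : ∀ i ∈ s, ∀ u, μ.real {ω | X i ω ≤ u} ≤ 1 - (1 - p) ^ u) (t : ℕ) :
    μ.real {ω | ∑ i ∈ s, X i ω ≤ t} ≤ geomSumCdf p #s t := by
  classical
  induction s using Finset.induction_on generalizing t with
  | empty => simp [geomSumCdf]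
  | @insert a s ha ih =>
    set W : Ω → ℕ := fun ω => ∑ i ∈ s, X i ω with hW_def
    have hW : Measurable W := Finset.measurable_sum s fun i _ => hmeas i
    have hWa : IndepFun W (X a) μ := by
      simpa only [Finset.sum_fn] using hindep.indepFun_finsetSum_of_notMem hmeas ha
    have hXa (u : ℕ) : μ.real {ω | X a ω ≤ u} ≤ ∑ k ∈ Icc 1 u, geomWeight p k := by
      rw [sum_Icc_geomWeight]
      exact hcdf a (mem_insert_self a s) u
    calc μ.real {ω | ∑ i ∈ insert a s, X i ω ≤ t}
        = ∑ v ∈ range (t + 1), μ.real {ω | W ω = v} * μ.real {ω | X a ω ≤ t - v} := by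
          rw [← measureReal_add_le_eq_sum hW (hmeas a) hWa]
          simp only [hW_def, sum_insert ha, add_comm]
      _ ≤ ∑ v ∈ range (t + 1), μ.real {ω | W ω = v} * ∑ k ∈ Icc 1 (t - v), geomWeight p k := by
          gcongr
          exact hXa _
      _ = ∑ k ∈ Icc 1 t, geomWeight p k * ∑ v ∈ range (t - k + 1), μ.real {ω | W ω = v} := by
          simp only [mul_sum]
          refine sum_comm' (fun v k => ?_) |>.trans (sum_congr rfl fun _ _ =>
            sum_congr rfl fun _ _ => mul_comm _ _)
          simp only [mem_range, mem_Icc]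
          omega
      _ = ∑ k ∈ Icc 1 t, geomWeight p k * μ.real {ω | W ω ≤ t - k} := by
          simp only [measureReal_le_eq_sum hW]
      _ ≤ ∑ k ∈ Icc 1 t, geomWeight p k * geomSumCdf p #s (t - k) := by
          gcongr with k
          · exact geomWeight_nonneg hp0 hp1 k
          · exact ih (fun i hi => hcdf i (mem_insert_of_mem hi)) _
      _ = geomSumCdf p #(insert a s) t := by
          rw [card_insert_of_notMem ha]
          rfl

lemma integral_firstPassage_le_sum_measureReal [IsFiniteMeasure μ] (T : ℕ) {X : ℕ → Ω → ℕ}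
    (hmeas : ∀ i, Measurable (X i)) (hpos : ∀ i, 1 ≤ i → μ {ω | X i ω = 0} = 0) {A : Ω → ℕ}
    (hA : ∀ ω, A ω = sInf {n : ℕ | T ≤ ∑ i ∈ Icc 1 n, X i ω}) :
    ∫ ω, (A ω : ℝ) ∂μ ≤ ∑ n ∈ range T, μ.real {ω | ∑ i ∈ Icc 1 n, X i ω < T} := by
  set E : ℕ → Set Ω := fun n => {ω | ∑ i ∈ Icc 1 n, X i ω < T}
  have hE (n : ℕ) : MeasurableSet (E n) :=
    measurableSet_lt (Finset.measurable_sum _ fun i _ => hmeas i) measurable_const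
  have hpos_ae : ∀ᵐ ω ∂μ, ∀ i ∈ Icc 1 T, 1 ≤ X i ω := by
    refine Filter.eventually_all_finset _ |>.mpr fun i hi => ae_iff.mpr ?_
    simpa [Nat.lt_one_iff] using hpos i (mem_Icc.mp hi).1
  have hA_le : ∀ᵐ ω ∂μ, (A ω : ℝ) ≤ ∑ n ∈ range T, (E n).indicator 1 ω := by
    filter_upwards [hpos_ae] with ω hω
    rw [hA]
    refine (Nat.cast_le.mpr (sInf_le_card_filter_sum_lt hω)).trans_eq ?_
    rw [natCast_card_filter]
    simp [Set.indicator_apply, E]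
  calc ∫ ω, (A ω : ℝ) ∂μ ≤ ∫ ω, ∑ n ∈ range T, (E n).indicator 1 ω ∂μ :=
        integral_mono_of_nonneg (ae_of_all _ fun ω => Nat.cast_nonneg _)
          (integrable_finsetSum _ fun n _ => (integrable_const 1).indicator (hE n)) hA_le
    _ = ∑ n ∈ range T, μ.real (E n) := by
        rw [integral_finsetSum _ fun n _ => (integrable_const 1).indicator (hE n)]
        exact sum_congr rfl fun n _ => integral_indicator_one (hE n)

lemma sum_measureReal_sum_lt_le [IsProbabilityMeasure μ] {X : ℕ → Ω → ℕ}
    (hmeas : ∀ i, Measurable (X i)) (hindep : iIndepFun X μ) {p : ℝ} (hp0 : 0 ≤ p) (hp1 : p ≤ 1)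
    {m : ℕ} (hm : 1 ≤ m)
    (hcdf : ∀ i, m ≤ i → ∀ u, μ.real {ω | X i ω ≤ u} ≤ 1 - (1 - p) ^ u) (T : ℕ) :
    ∑ n ∈ range T, μ.real {ω | ∑ i ∈ Icc 1 n, X i ω < T} ≤ m + T * p := by
  set f : ℕ → ℝ := fun n => μ.real {ω | ∑ i ∈ Icc 1 n, X i ω < T}
  have htail (j : ℕ) : f (m + j) ≤ geomSumCdf p (j + 1) (T - 1) := by
    have hsub : {ω | ∑ i ∈ Icc 1 (m + j), X i ω < T}
        ⊆ {ω | ∑ i ∈ Icc m (m + j), X i ω ≤ T - 1} := fun ω hω => by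
        have := sum_le_sum_of_subset (f := fun i => X i ω) (Icc_subset_Icc_left hm (b := m + j))
        simp only [Set.mem_ofPred_eq] at hω ⊢
        omega
    calc f (m + j) ≤ μ.real {ω | ∑ i ∈ Icc m (m + j), X i ω ≤ T - 1} := measureReal_mono hsub
      _ ≤ geomSumCdf p #(Icc m (m + j)) (T - 1) :=
          measureReal_sum_le_le_geomSumCdf hmeas hindep hp0 hp1 _
            (fun i hi => hcdf i (mem_Icc.mp hi).1) _
      _ = geomSumCdf p (j + 1) (T - 1) := by rw [Nat.card_Icc]; congr 1; omega
  calc ∑ n ∈ range T, f n ≤ ∑ n ∈ range (m + T), f n :=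
        sum_le_sum_of_subset_of_nonneg (range_subset_range.mpr (by omega))
          fun _ _ _ => measureReal_nonneg
    _ = ∑ n ∈ range m, f n + ∑ j ∈ range T, f (m + j) := sum_range_add f m T
    _ ≤ ∑ n ∈ range m, 1 + ∑ j ∈ range T, geomSumCdf p (j + 1) (T - 1) := by
        gcongr with n _ j _
        · exact measureReal_le_one
        · exact htail j
    _ ≤ m + ((T - 1 : ℕ) : ℝ) * p := by
        simpa using sum_range_geomSumCdf_succ_le hp0 hp1 (T - 1) T
    _ ≤ m + T * p := by gcongr; exact Nat.sub_le T 1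

end Probability

/-- For a perfect-square threshold `T = m²`, if `X i ∼ Geo(1/i)` are
independent geometric variables on the positive integers (so `E[X i] = i`) and `A`
is the first `n` with `X 1 + ⋯ + X n ≥ T`, then `E[A] ≤ 2√T`. -/
theorem precision_single_counter_recirculation_bound
    {Ω : Type*} [MeasurableSpace Ω] (μ : Measure Ω) [IsProbabilityMeasure μ]
    (m : ℕ) (hm : 1 ≤ m) (T : ℕ) (hT : T = m ^ 2)
    (X : ℕ → Ω → ℕ)
    (hmeas : ∀ i, Measurable (X i))
    (hindep : iIndepFun X μ)
    (hgeom : ∀ i, 1 ≤ i → ∀ k, 1 ≤ k →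
      μ {ω | X i ω = k} =
        ENNReal.ofReal ((1 - 1 / (i : ℝ)) ^ (k - 1) * (1 / (i : ℝ))))
    (A : Ω → ℕ)
    (hA : ∀ ω, A ω = sInf {n : ℕ | T ≤ ∑ i ∈ Finset.Icc 1 n, X i ω}) :
    ∫ ω, (A ω : ℝ) ∂μ ≤ 2 * Real.sqrt T := by
  have hp (i : ℕ) (hi : 1 ≤ i) : 0 < 1 / (i : ℝ) ∧ 1 / (i : ℝ) ≤ 1 :=
    ⟨by positivity, (div_le_one (by positivity)).mpr (by exact_mod_cast hi)⟩
  have hcdf (i : ℕ) (hi : m ≤ i) (u : ℕ) :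
      μ.real {ω | X i ω ≤ u} ≤ 1 - (1 - 1 / (m : ℝ)) ^ u := by
    have hi1 : 1 ≤ i := hm.trans hi
    rw [measureReal_le_eq_of_geom (hmeas i) (hgeom i hi1) (hp i hi1).1 (hp i hi1).2]
    gcongr
    exact sub_nonneg.mpr (hp m hm).2
  have hsqrt : Real.sqrt T = m := by
    rw [hT, Nat.cast_pow, Real.sqrt_sq (Nat.cast_nonneg m)]
  calc ∫ ω, (A ω : ℝ) ∂μ ≤ ∑ n ∈ range T, μ.real {ω | ∑ i ∈ Icc 1 n, X i ω < T} :=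
        integral_firstPassage_le_sum_measureReal T hmeas
          (fun i hi => measure_eq_zero_of_geom (hmeas i) (hgeom i hi) (hp i hi).1 (hp i hi).2) hA
    _ ≤ m + T * (1 / m) :=
        sum_measureReal_sum_lt_le hmeas hindep (hp m hm).1.le (hp m hm).2 hm hcdf T
    _ = 2 * Real.sqrt T := by
        rw [hsqrt, hT, Nat.cast_pow]
        field_simp
        ring
end

section
/- Let X₁, X₂, … be independent geometric random variables on the positive integers with Xᵢ having parameter 1/i, and let A = min{n : X₁ + ⋯ + Xₙ ≥ T} for a positive integer T. Then E[A] ≤ (⌈√T⌉ − 1) + E[min{n : X′₁ + ⋯ + X′ₙ ≥ T}], where X′₁, X′₂, … are i.i.d. geometric variables with parameter 1/⌈√T⌉. -/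
/-!
For `i ≥ m = ⌈√T⌉` the variable `X (m - 1 + i)`, geometric with success probability
`1 / (m - 1 + i) ≤ 1 / m`, stochastically dominates `X' i`. Stochastic dominance of laws on `ℕ`
is preserved by convolution, so by independence `X m + ⋯ + X (m - 1 + n)` dominates
`X' 1 + ⋯ + X' n`. As `A > m - 1 + n` forces `X m + ⋯ + X (m - 1 + n) < T`, and
`X' 1 + ⋯ + X' n < T` forces `A' > n` (the `X' i` are positive), this gives
`P(A > m - 1 + n) ≤ P(A' > n)`; summing these tail probabilities bounds `E[A]` by `m - 1 + E[A']`.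
-/

open MeasureTheory ProbabilityTheory
open scoped ENNReal

def StochDominates (ν ν' : Measure ℕ) : Prop :=
  ∀ t, ν (Set.Iio t) ≤ ν' (Set.Iio t)

lemma MeasureTheory.Measure.conv_Iio_eq_lintegral (ν ρ : Measure ℕ) [SFinite ρ] (t : ℕ) :
    (ν ∗ ρ) (Set.Iio t) = ∫⁻ x, ρ (Set.Iio (t - x)) ∂ν := by
  rw [Measure.conv, Measure.map_apply measurable_add measurableSet_Iio,
    Measure.prod_apply (measurable_add measurableSet_Iio)]
  congr with x
  congr with y
  simp [Nat.lt_sub_iff_add_lt, add_comm]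

lemma StochDominates.conv {ν ν' ρ ρ' : Measure ℕ} [SFinite ν'] [SFinite ρ] [SFinite ρ']
    (hν : StochDominates ν ν') (hρ : StochDominates ρ ρ') :
    StochDominates (ν ∗ ρ) (ν' ∗ ρ') := by
  intro t
  calc (ν ∗ ρ) (Set.Iio t) = ∫⁻ x, ρ (Set.Iio (t - x)) ∂ν := Measure.conv_Iio_eq_lintegral ..
    _ ≤ ∫⁻ x, ρ' (Set.Iio (t - x)) ∂ν := lintegral_mono fun x ↦ hρ (t - x)
    _ = (ρ' ∗ ν) (Set.Iio t) := by rw [← Measure.conv_Iio_eq_lintegral, Measure.conv_comm]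
    _ = ∫⁻ y, ν (Set.Iio (t - y)) ∂ρ' := Measure.conv_Iio_eq_lintegral ..
    _ ≤ ∫⁻ y, ν' (Set.Iio (t - y)) ∂ρ' := lintegral_mono fun y ↦ hν (t - y)
    _ = (ν' ∗ ρ') (Set.Iio t) := by rw [← Measure.conv_Iio_eq_lintegral, Measure.conv_comm]

section

variable {Ω Ω' ι : Type*} [MeasurableSpace Ω] [MeasurableSpace Ω']
  {μ : Measure Ω} {μ' : Measure Ω'}

lemma stochDominates_map_iff {f : Ω → ℕ} {g : Ω' → ℕ} (hf : Measurable f) (hg : Measurable g) :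
    StochDominates (μ.map f) (μ'.map g) ↔ ∀ t, μ {ω | f ω < t} ≤ μ' {ω | g ω < t} := by
  simp only [StochDominates, Measure.map_apply hf measurableSet_Iio,
    Measure.map_apply hg measurableSet_Iio]
  rfl

lemma stochDominates_map_sum [IsProbabilityMeasure μ] [IsProbabilityMeasure μ']
    {Y : ι → Ω → ℕ} {Z : ι → Ω' → ℕ} (hY : ∀ i, Measurable (Y i)) (hZ : ∀ i, Measurable (Z i))
    (hY_indep : iIndepFun Y μ) (hZ_indep : iIndepFun Z μ') (s : Finset ι)
    (hdom : ∀ i ∈ s, StochDominates (μ.map (Y i)) (μ'.map (Z i))) :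
    StochDominates (μ.map (∑ i ∈ s, Y i)) (μ'.map (∑ i ∈ s, Z i)) := by
  classical
  induction s using Finset.induction_on with
  | empty => simp [StochDominates, Pi.zero_def, Measure.map_const]
  | insert a s ha ih =>
    rw [Finset.sum_insert ha, Finset.sum_insert ha, add_comm (Y a), add_comm (Z a),
      (hY_indep.indepFun_finsetSum_of_notMem hY ha).map_add_eq_map_conv_map (by fun_prop) (hY a),
      (hZ_indep.indepFun_finsetSum_of_notMem hZ ha).map_add_eq_map_conv_map (by fun_prop) (hZ a)]
    exact (ih fun i hi ↦ hdom i (Finset.mem_insert_of_mem hi)).conv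
      (hdom a (Finset.mem_insert_self a s))

/-- The geometric law on `{1, 2, …}`; Mathlib's `geometricMeasure` is its shift to `{0, 1, …}`. -/
def HasGeometricLaw (Y : Ω → ℕ) (μ : Measure Ω) (q : ℝ) : Prop :=
  ∀ k, 1 ≤ k → μ {ω | Y ω = k} = ENNReal.ofReal ((1 - q) ^ (k - 1) * q)

namespace HasGeometricLaw

variable [IsProbabilityMeasure μ] {Y : Ω → ℕ} {q : ℝ}

lemma measure_eq_zero (hY : HasGeometricLaw Y μ q) (hYm : Measurable Y) (hq : 0 < q)
    (hq1 : q ≤ 1) : μ {ω | Y ω = 0} = 0 := by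
  have hpos : ∑' k, μ {ω | Y ω = k + 1} = 1 := by
    calc ∑' k, μ {ω | Y ω = k + 1} = ∑' k : ℕ, ENNReal.ofReal ((1 - q) ^ k * q) :=
          tsum_congr fun k ↦ by simpa using hY (k + 1) le_add_self
      _ = ENNReal.ofReal (∑' k : ℕ, (1 - q) ^ k * q) :=
          (ENNReal.ofReal_tsum_of_nonneg (fun k ↦ by have := sub_nonneg.2 hq1; positivity)
            ((summable_geometric_of_lt_one (by linarith) (by linarith)).mul_right q)).symm
      _ = 1 := by
          rw [tsum_mul_right, tsum_geometric_of_lt_one (by linarith) (by linarith)]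
          simp [hq.ne']
  have htotal : ∑' k, μ {ω | Y ω = k} = 1 := by
    have := tsum_measure_preimage_singleton (μ := μ) Set.countable_univ (f := Y)
      fun k _ ↦ hYm (measurableSet_singleton k)
    rwa [tsum_univ (fun k ↦ μ (Y ⁻¹' {k})), Set.preimage_univ, measure_univ] at this
  rw [tsum_eq_zero_add' ENNReal.summable, hpos] at htotal
  simpa using htotal

lemma ae_pos (hY : HasGeometricLaw Y μ q) (hYm : Measurable Y) (hq : 0 < q) (hq1 : q ≤ 1) :
    ∀ᵐ ω ∂μ, 0 < Y ω :=
  (measure_eq_zero_iff_ae_notMem.1 (hY.measure_eq_zero hYm hq hq1)).mono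
    fun _ h ↦ Nat.pos_of_ne_zero h

lemma measure_lt_succ (hY : HasGeometricLaw Y μ q) (hYm : Measurable Y) (hq : 0 < q)
    (hq1 : q ≤ 1) (c : ℕ) : μ {ω | Y ω < c + 1} = ENNReal.ofReal (1 - (1 - q) ^ c) := by
  have hgeom : ∑ k ∈ Finset.range c, (1 - q) ^ k * q = 1 - (1 - q) ^ c := by
    rw [← Finset.sum_mul]
    linear_combination -(geom_sum_mul (1 - q) c)
  have hset : {ω | Y ω < c + 1} = Y ⁻¹' ↑(Finset.range (c + 1)) := by ext; simp
  rw [hset, ← sum_measure_preimage_singleton _ fun k _ ↦ hYm (measurableSet_singleton k),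
    Finset.sum_range_succ', ← hgeom,
    ENNReal.ofReal_sum_of_nonneg fun k _ ↦ by have := sub_nonneg.2 hq1; positivity,
    show Y ⁻¹' {0} = {ω | Y ω = 0} from rfl, hY.measure_eq_zero hYm hq hq1, add_zero]
  exact Finset.sum_congr rfl fun k _ ↦ hY (k + 1) le_add_self

lemma stochDominates_map [IsProbabilityMeasure μ'] {Z : Ω' → ℕ} {q' : ℝ}
    (hY : HasGeometricLaw Y μ q) (hZ : HasGeometricLaw Z μ' q') (hYm : Measurable Y)
    (hZm : Measurable Z) (hq : 0 < q) (hqq' : q ≤ q') (hq' : q' ≤ 1) :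
    StochDominates (μ.map Y) (μ'.map Z) := by
  rw [stochDominates_map_iff hYm hZm]
  rintro (_ | c)
  · simp
  rw [hY.measure_lt_succ hYm hq (hqq'.trans hq') c,
    hZ.measure_lt_succ hZm (hq.trans_le hqq') hq' c]
  gcongr

end HasGeometricLaw

lemma measurable_sInf_setOf {p : ℕ → Ω → Prop} (hp : ∀ n, MeasurableSet {ω | p n ω}) :
    Measurable fun ω ↦ sInf {n | p n ω} := by
  refine measurable_of_Iic fun k ↦ ?_
  have hpre : (fun ω ↦ sInf {n | p n ω}) ⁻¹' Set.Iic k =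
      (⋂ n, {ω | p n ω}ᶜ) ∪ ⋃ j ≤ k, {ω | p j ω} := by
    ext ω
    rcases Set.eq_empty_or_nonempty {n | p n ω} with hempty | ⟨j, hj⟩
    · simp_all [Set.eq_empty_iff_forall_notMem]
    · simp only [Set.mem_preimage, Set.mem_Iic, Set.mem_union, Set.mem_iInter, Set.mem_compl_iff,
        Set.mem_iUnion, exists_prop]
      refine ⟨fun h ↦ .inr ⟨_, h, Nat.sInf_mem ⟨j, hj⟩⟩, ?_⟩
      rintro (h | ⟨i, hik, hi⟩)
      · exact absurd hj (h j)
      · exact (Nat.sInf_le hi).trans hik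
  rw [hpre]
  exact (MeasurableSet.iInter fun n ↦ (hp n).compl).union
    (MeasurableSet.iUnion fun j ↦ MeasurableSet.iUnion fun (_ : j ≤ k) ↦ hp j)

lemma lintegral_natCast_eq_tsum_measure_lt {f : Ω → ℕ} (hf : Measurable f) :
    ∫⁻ ω, (f ω : ℝ≥0∞) ∂μ = ∑' n, μ {ω | n < f ω} := by
  have hsum : ∀ ω, (f ω : ℝ≥0∞) = ∑' n, {ω | n < f ω}.indicator (fun _ ↦ 1) ω := by
    intro ω
    rw [tsum_eq_sum (s := Finset.range (f ω)) fun n hn ↦ by simp_all]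
    simp [Set.indicator_apply, Finset.filter_true_of_mem fun n hn ↦ Finset.mem_range.1 hn]
  simp_rw [hsum]
  rw [lintegral_tsum fun n ↦
    (measurable_const.indicator (s := {ω | n < f ω}) (hf measurableSet_Ioi)).aemeasurable]
  exact tsum_congr fun n ↦ lintegral_indicator_one (hf measurableSet_Ioi)

lemma lintegral_natCast_le_add_of_measure_lt_le [IsProbabilityMeasure μ] {f : Ω → ℕ}
    {g : Ω' → ℕ} (hf : Measurable f) (hg : Measurable g) (k : ℕ)
    (h : ∀ n, μ {ω | n + k < f ω} ≤ μ' {ω | n < g ω}) :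
    ∫⁻ ω, (f ω : ℝ≥0∞) ∂μ ≤ k + ∫⁻ ω, (g ω : ℝ≥0∞) ∂μ' := by
  rw [lintegral_natCast_eq_tsum_measure_lt hf, lintegral_natCast_eq_tsum_measure_lt hg,
    (ENNReal.summable.hasSum.sum_range_add (f := fun n ↦ μ {ω | n < f ω})).tsum_eq]
  refine add_le_add ?_ (ENNReal.tsum_le_tsum h)
  simpa using Finset.sum_le_card_nsmul (Finset.range k) _ 1 fun n _ ↦ prob_le_one

lemma integral_natCast_eq_toReal_lintegral {f : Ω → ℕ} (hf : Measurable f) :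
    ∫ ω, (f ω : ℝ) ∂μ = (∫⁻ ω, (f ω : ℝ≥0∞) ∂μ).toReal := by
  simpa using integral_toReal (μ := μ) (f := fun ω ↦ (f ω : ℝ≥0∞)) (by fun_prop) (by simp)

lemma integral_natCast_le_add_of_measure_lt_le [IsProbabilityMeasure μ] [IsFiniteMeasure μ']
    {f : Ω → ℕ} {g : Ω' → ℕ} (hf : Measurable f) (hg : Measurable g) {N : ℕ}
    (hg_le : ∀ᵐ ω ∂μ', g ω ≤ N) (k : ℕ) (h : ∀ n, μ {ω | n + k < f ω} ≤ μ' {ω | n < g ω}) :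
    ∫ ω, (f ω : ℝ) ∂μ ≤ k + ∫ ω, (g ω : ℝ) ∂μ' := by
  have hg_fin : ∫⁻ ω, (g ω : ℝ≥0∞) ∂μ' ≠ ∞ := by
    refine ne_top_of_le_ne_top ?_ (lintegral_mono_ae (g := fun _ ↦ (N : ℝ≥0∞))
      (hg_le.mono fun ω hω ↦ by exact_mod_cast hω))
    simpa using ENNReal.mul_ne_top (ENNReal.natCast_ne_top N) (measure_ne_top μ' Set.univ)
  rw [integral_natCast_eq_toReal_lintegral hf, integral_natCast_eq_toReal_lintegral hg,
    ← ENNReal.toReal_natCast k, ← ENNReal.toReal_add (by simp) hg_fin]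
  exact ENNReal.toReal_mono (by simpa using hg_fin)
    (lintegral_natCast_le_add_of_measure_lt_le hf hg k h)

/-- Equals `0` when the partial sums never reach `T`, as `sInf ∅ = 0`. -/
noncomputable def hittingIndex (T : ℕ) (x : ℕ → ℕ) : ℕ :=
  sInf {n | T ≤ ∑ i ∈ Finset.Icc 1 n, x i}

lemma measurable_hittingIndex {X : ℕ → Ω → ℕ} (hX : ∀ i, Measurable (X i)) (T : ℕ) :
    Measurable fun ω ↦ hittingIndex T (X · ω) :=
  measurable_sInf_setOf fun _ ↦ measurableSet_le measurable_const (by fun_prop)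

section hittingIndex

variable {x : ℕ → ℕ} {T n : ℕ}

lemma le_sum_Icc_of_one_le (hx : ∀ i, 1 ≤ i → 1 ≤ x i) (n : ℕ) :
    n ≤ ∑ i ∈ Finset.Icc 1 n, x i := by
  simpa using Finset.card_nsmul_le_sum (Finset.Icc 1 n) x 1 fun i hi ↦ hx i (Finset.mem_Icc.1 hi).1

lemma hittingIndex_le (hx : ∀ i, 1 ≤ i → 1 ≤ x i) : hittingIndex T x ≤ T :=
  Nat.sInf_le (le_sum_Icc_of_one_le hx T)

lemma lt_hittingIndex_of_sum_Icc_lt (hx : ∀ i, 1 ≤ i → 1 ≤ x i)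
    (h : ∑ i ∈ Finset.Icc 1 n, x i < T) : n < hittingIndex T x := by
  by_contra! hle
  have hmem : T ≤ ∑ i ∈ Finset.Icc 1 (hittingIndex T x), x i :=
    Nat.sInf_mem (s := {k | T ≤ ∑ i ∈ Finset.Icc 1 k, x i}) ⟨T, le_sum_Icc_of_one_le hx T⟩
  have hmono := Finset.sum_le_sum_of_subset (f := x) (Finset.Icc_subset_Icc_right (a := 1) hle)
  omega

lemma sum_Icc_comp_add_le (x : ℕ → ℕ) (k n : ℕ) :
    ∑ i ∈ Finset.Icc 1 n, x (k + i) ≤ ∑ i ∈ Finset.Icc 1 (n + k), x i := by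
  have hshift := Finset.sum_map (Finset.Icc 1 n) (addLeftEmbedding k) x
  rw [Finset.map_add_left_Icc] at hshift
  rw [show ∑ i ∈ Finset.Icc 1 n, x (k + i) = _ from hshift.symm]
  exact Finset.sum_le_sum_of_subset (Finset.Icc_subset_Icc (by omega) (by omega))

lemma sum_Icc_comp_add_lt_of_lt_hittingIndex (k : ℕ) (h : n + k < hittingIndex T x) :
    ∑ i ∈ Finset.Icc 1 n, x (k + i) < T := by
  by_contra! hle
  exact (Nat.sInf_le (s := {j | T ≤ ∑ i ∈ Finset.Icc 1 j, x i})
    (hle.trans (sum_Icc_comp_add_le x k n))).not_gt h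

end hittingIndex

end

/-- With `X i ∼ Geo(1/i)` independent and hitting time
`A = min{n : X 1 + ⋯ + X n ≥ T}`, we have
`E[A] ≤ (⌈√T⌉ - 1) + E[A']` where `A'` is the hitting time of `T` for i.i.d.
geometric variables `X' i` with parameter `1/⌈√T⌉`. -/
theorem precision_hitting_time_domination_bound
    {Ω : Type*} [MeasurableSpace Ω] (μ : Measure Ω) [IsProbabilityMeasure μ]
    {Ω' : Type*} [MeasurableSpace Ω'] (μ' : Measure Ω') [IsProbabilityMeasure μ']
    (T : ℕ) (hT : 1 ≤ T)
    (X : ℕ → Ω → ℕ)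
    (hmeas : ∀ i, Measurable (X i))
    (hindep : iIndepFun X μ)
    (hgeom : ∀ i, 1 ≤ i → ∀ k, 1 ≤ k →
      μ {ω | X i ω = k} =
        ENNReal.ofReal ((1 - 1 / (i : ℝ)) ^ (k - 1) * (1 / (i : ℝ))))
    (A : Ω → ℕ)
    (hA : ∀ ω, A ω = sInf {n : ℕ | T ≤ ∑ i ∈ Finset.Icc 1 n, X i ω})
    (X' : ℕ → Ω' → ℕ)
    (hmeas' : ∀ i, Measurable (X' i))
    (hiid' : iIndepFun X' μ')
    (hgeom' : ∀ i k, 1 ≤ k →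
      μ' {ω | X' i ω = k} =
        ENNReal.ofReal ((1 - 1 / (⌈Real.sqrt T⌉₊ : ℝ)) ^ (k - 1) *
          (1 / (⌈Real.sqrt T⌉₊ : ℝ))))
    (A' : Ω' → ℕ)
    (hA' : ∀ ω, A' ω = sInf {n : ℕ | T ≤ ∑ i ∈ Finset.Icc 1 n, X' i ω}) :
    ∫ ω, (A ω : ℝ) ∂μ ≤ ((⌈Real.sqrt T⌉₊ : ℝ) - 1) + ∫ ω, (A' ω : ℝ) ∂μ' := by
  set m := ⌈Real.sqrt T⌉₊
  have hm : 1 ≤ m := Nat.one_le_ceil_iff.2 (Real.sqrt_pos.2 (by exact_mod_cast hT))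
  have hq1 : 1 / (m : ℝ) ≤ 1 := div_le_one_of_le₀ (by exact_mod_cast hm) (by positivity)
  obtain rfl : A = fun ω ↦ hittingIndex T (X · ω) := funext hA
  obtain rfl : A' = fun ω ↦ hittingIndex T (X' · ω) := funext hA'
  have hX'_pos : ∀ᵐ ω ∂μ', ∀ i, 1 ≤ i → 1 ≤ X' i ω :=
    (ae_all_iff.2 fun i ↦ HasGeometricLaw.ae_pos (hgeom' i) (hmeas' i) (by positivity) hq1).mono
      fun _ h i _ ↦ h i
  have hdom (i : ℕ) (hi : 1 ≤ i) : StochDominates (μ.map (X (m - 1 + i))) (μ'.map (X' i)) :=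
    HasGeometricLaw.stochDominates_map (hgeom _ (by omega)) (hgeom' i) (hmeas _) (hmeas' i)
      (by positivity) (one_div_le_one_div_of_le (by positivity) (by norm_cast; omega)) hq1
  have htail (n : ℕ) : μ {ω | n + (m - 1) < hittingIndex T (X · ω)} ≤
      μ' {ω | n < hittingIndex T (X' · ω)} := calc
    _ ≤ μ {ω | (∑ i ∈ Finset.Icc 1 n, X (m - 1 + i)) ω < T} :=
        measure_mono fun ω (hω : n + (m - 1) < hittingIndex T (X · ω)) ↦
          show (∑ i ∈ Finset.Icc 1 n, X (m - 1 + i)) ω < T by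
            rw [Finset.sum_apply]; exact sum_Icc_comp_add_lt_of_lt_hittingIndex _ hω
    _ ≤ μ' {ω | (∑ i ∈ Finset.Icc 1 n, X' i) ω < T} :=
        (stochDominates_map_iff (by fun_prop) (by fun_prop)).1
          (stochDominates_map_sum (fun i ↦ hmeas _) hmeas' (hindep.precomp (add_right_injective _))
            hiid' _ fun i hi ↦ hdom i (Finset.mem_Icc.1 hi).1) T
    _ ≤ μ' {ω | n < hittingIndex T (X' · ω)} :=
        measure_mono_ae <| hX'_pos.mono fun ω hω (h : (∑ i ∈ Finset.Icc 1 n, X' i) ω < T) ↦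
          show n < hittingIndex T (X' · ω) from
            lt_hittingIndex_of_sum_Icc_lt hω (by rwa [Finset.sum_apply] at h)
  have h := integral_natCast_le_add_of_measure_lt_le (measurable_hittingIndex hmeas T)
    (measurable_hittingIndex hmeas' T) (hX'_pos.mono fun _ ↦ hittingIndex_le) (m - 1) htail
  rwa [Nat.cast_sub hm, Nat.cast_one] at h
end
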